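/- arXiv:math/0403119 — 3 statements merged into one kernel-verified Lean document; each statement's English description precedes it below -/
import Mathlib

section
/- For every complex number s with Re(s) > 0 and every positive integer n, the function Φ_n(s) = ∫_{-∞}^{∞} F_n(x) e^{(s-1/2)x} dx equals 1 - (1 - 1/s)^n, where F_n(x) = e^{x/2} ∑_{j=1}^{n} C(n,j) x^{j-1}/(j-1)! for x < 0, F_n(0) = n/2, and F_n(x) = 0 for x > 0. -/
open MeasureTheory

/-- The test function `F_n` of Bombieri–Lagarias. -/
noncomputable def LiF (n : ℕ) (x : ℝ) : ℝ :=
  if x < 0 then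
    Real.exp (x / 2) * ∑ j ∈ Finset.Icc 1 n, (n.choose j : ℝ) * x ^ (j - 1) / (Nat.factorial (j - 1) : ℝ)
  else if x = 0 then n / 2 else 0

/-!
For `x < 0` the integrand is `∑_{i<n} C(n, i+1) xⁱ e^{sx} / i!`, and it vanishes for `x > 0`.
The integral `∫_{-∞}^0 xⁱ e^{sx} dx` is the `i`-th derivative of the complex moment generating
function of Lebesgue measure on `(-∞, 0]`, which is `1/s`; so it equals `(-1)ⁱ i! / s^{i+1}`, and
the resulting sum is the binomial expansion of `1 - (1 - 1/s)ⁿ`.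
-/

open Set Filter Topology ProbabilityTheory
open scoped Nat

theorem Ioi_subset_interior_integrableExpSet_Iic :
    Ioi 0 ⊆ interior (integrableExpSet id (volume.restrict (Iic (0 : ℝ)))) :=
  isOpen_Ioi.subset_interior_iff.2 fun _ ht ↦ integrableOn_exp_mul_Iic ht 0

theorem integrableOn_Iic_pow_mul_cexp {s : ℂ} (hs : 0 < s.re) (k : ℕ) :
    IntegrableOn (fun x : ℝ ↦ (x : ℂ) ^ k * Complex.exp (s * x)) (Iic 0) :=
  integrable_pow_mul_cexp_of_re_mem_interior_integrableExpSet
    (X := id) (Ioi_subset_interior_integrableExpSet_Iic hs) k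

theorem integral_Iic_pow_mul_cexp {s : ℂ} (hs : 0 < s.re) (k : ℕ) :
    ∫ x in Iic (0 : ℝ), (x : ℂ) ^ k * Complex.exp (s * x) = (-1) ^ k * k ! * s ^ (-1 - k : ℤ) := by
  have hmgf : complexMGF id (volume.restrict (Iic (0 : ℝ))) =ᶠ[𝓝 s] Inv.inv := by
    filter_upwards [(isOpen_lt continuous_const Complex.continuous_re).mem_nhds hs] with z hz
    simp [complexMGF, integral_exp_mul_complex_Iic hz]
  have := iteratedDeriv_complexMGF (X := id) (Ioi_subset_interior_integrableExpSet_Iic hs) k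
  rw [hmgf.iteratedDeriv_eq, iteratedDeriv_eq_iterate, iter_deriv_inv] at this
  simpa using this.symm

theorem one_add_pow_eq_one_add_sum {R : Type*} [CommSemiring R] (y : R) (n : ℕ) :
    (1 + y) ^ n = 1 + ∑ i ∈ Finset.range n, (n.choose (i + 1) : R) * y ^ (i + 1) := by
  rw [add_comm, add_pow, Finset.sum_range_succ']
  simp [add_comm, mul_comm]

theorem LiF_of_pos {n : ℕ} {x : ℝ} (hx : 0 < x) : LiF n x = 0 := by
  simp [LiF, hx.not_gt, hx.ne']

theorem LiF_of_neg {n : ℕ} {x : ℝ} (hx : x < 0) :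
    LiF n x = Real.exp (x / 2) * ∑ i ∈ Finset.range n, (n.choose (i + 1) : ℝ) * x ^ i / i ! := by
  rw [LiF, if_pos hx, ← Finset.Ico_add_one_right_eq_Icc, Finset.sum_Ico_eq_sum_range]
  simp [add_comm]

theorem LiF_mul_cexp_of_neg (n : ℕ) (s : ℂ) {x : ℝ} (hx : x < 0) :
    (LiF n x : ℂ) * Complex.exp ((s - 1 / 2) * x)
      = ∑ i ∈ Finset.range n, (n.choose (i + 1) / i ! : ℂ) * ((x : ℂ) ^ i * Complex.exp (s * x)) := by
  have hexp : Complex.exp (x / 2) * Complex.exp ((s - 1 / 2) * x) = Complex.exp (s * x) := by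
    rw [← Complex.exp_add]
    ring_nf
  rw [LiF_of_neg hx, ← hexp]
  push_cast
  rw [mul_right_comm, Finset.mul_sum]
  exact Finset.sum_congr rfl fun i _ ↦ by ring

theorem one_sub_one_sub_one_div_pow {s : ℂ} (hs : s ≠ 0) (n : ℕ) :
    1 - (1 - 1 / s) ^ n
      = ∑ i ∈ Finset.range n, (n.choose (i + 1) / i ! : ℂ) * ((-1) ^ i * i ! * s ^ (-1 - i : ℤ)) := by
  rw [sub_eq_add_neg 1 (1 / s), one_add_pow_eq_one_add_sum, sub_add_cancel_left,
    ← Finset.sum_neg_distrib]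
  refine Finset.sum_congr rfl fun i _ ↦ ?_
  have hfac : (i ! : ℂ) ≠ 0 := by exact_mod_cast i.factorial_ne_zero
  rw [show (-1 - i : ℤ) = -((i + 1 : ℕ) : ℤ) by push_cast; ring, zpow_neg, zpow_natCast,
    neg_pow, one_div, inv_pow]
  field_simp
  ring

theorem stmt0_general (n : ℕ) (s : ℂ) (hs : 0 < s.re) :
    ∫ x : ℝ, (LiF n x : ℂ) * Complex.exp ((s - 1 / 2) * x) = 1 - (1 - 1 / s) ^ n := by
  have hs0 : s ≠ 0 := by rintro rfl; simp at hs
  have hsupp : ∀ x ∉ Iic (0 : ℝ), (LiF n x : ℂ) * Complex.exp ((s - 1 / 2) * x) = 0 :=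
    fun x hx ↦ by simp [LiF_of_pos (not_le.1 hx)]
  rw [← setIntegral_eq_integral_of_forall_compl_eq_zero hsupp, integral_Iic_eq_integral_Iio,
    setIntegral_congr_fun measurableSet_Iio fun x hx ↦ LiF_mul_cexp_of_neg n s hx,
    integral_finsetSum _ fun i _ ↦
      ((integrableOn_Iic_pow_mul_cexp hs i).mono_set Iio_subset_Iic_self).const_mul _,
    one_sub_one_sub_one_div_pow hs0]
  simp_rw [integral_const_mul, ← integral_Iic_eq_integral_Iio, integral_Iic_pow_mul_cexp hs]

/-- Lemma 2.4: for `Re s > 0`, `Φ_n(s) = ∫ F_n(x) e^{(s-1/2)x} dx = 1 - (1 - 1/s)^n`. -/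
theorem stmt0 (n : ℕ) (hn : 1 ≤ n) (s : ℂ) (hs : 0 < s.re) :
    ∫ x : ℝ, (LiF n x : ℂ) * Complex.exp ((s - 1 / 2) * x) = 1 - (1 - 1 / s) ^ n :=
  stmt0_general n s hs
end

section
/- Let p be a prime, α a complex number with |α| ≤ 1, and set s = 1/(1-z). Then for z in a sufficiently small neighborhood of 0, d/dz [log(1 - α p^{-s})] = ∑_{n=0}^{∞} c_n z^n where c_n = ∑_{j=0}^{n} C(n+1, j+1) ((-1)^j / j!) ∑_{m=1}^{∞} (log p / p^m) α^m (log p^m)^j. -/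
/-!
Write `L = log p`, `s = 1/(1-z)` and `Q = α p^(-s)`. The derivative is
`L s² Q/(1-Q) = L ∑_{m≥0} (α/p)^(m+1) s² exp (-(m+1) L z/(1-z))`, since `p^(-s) = p⁻¹ p^(-(s-1))`
and `s - 1 = z/(1-z)`. Expanding the exponential in powers of `z/(1-z)` and then each
`z^j/(1-z)^(j+2)` as a binomial series in `z` gives a triple series over `(m, j, k)`. For
`|z| < 1/2` it converges absolutely: the series of norms is the same expansion at `(|α|/p, L, |z|)`,
which is geometric in `m` with ratio `(|α|/p) exp (L|z|/(1-|z|)) < (1/p) exp L = 1`. Summing first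
over `m` and then along the antidiagonals `j + k = n` gives the coefficients of `zⁿ`.
-/

open Finset NormedSpace Nat

theorem HasSum.prod_of_hasSum {α β γ : Type*} [AddCommMonoid α] [TopologicalSpace α]
    [ContinuousAdd α] [T3Space α] {f : β × γ → α} {g : β → α} {a : α}
    (ha : HasSum g a) (hf : ∀ b, HasSum (fun c ↦ f (b, c)) (g b)) (hf' : Summable f) :
    HasSum f a := by
  simpa [(hf'.hasSum.prod_fiberwise hf).unique ha] using hf'.hasSum

theorem hasSum_prod_of_nonneg {β γ : Type*} {f : β × γ → ℝ} {g : β → ℝ} {a : ℝ} (h₀ : 0 ≤ f)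
    (ha : HasSum g a) (hf : ∀ b, HasSum (fun c ↦ f (b, c)) (g b)) : HasSum f a :=
  ha.prod_of_hasSum hf <| (summable_prod_of_nonneg h₀).2
    ⟨fun b ↦ (hf b).summable, by simpa only [fun b ↦ (hf b).tsum_eq] using ha.summable⟩

theorem HasSum.sum_antidiagonal {E : Type*} [AddCommMonoid E] [TopologicalSpace E]
    [ContinuousAdd E] [RegularSpace E] {f : ℕ × ℕ → E} {a : E} (hf : HasSum f a) :
    HasSum (fun n ↦ ∑ jk ∈ antidiagonal n, f jk) a := by
  have := (HasAntidiagonal.sigmaAntidiagonalEquivProd (A := ℕ)).hasSum_iff.2 hf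
  exact this.sigma fun n ↦ by
    rw [← sum_coe_sort]
    exact hasSum_fintype _

theorem HasSum.sum_antidiagonal_tsum {E : Type*} [NormedAddCommGroup E] [CompleteSpace E]
    {f : ℕ × ℕ × ℕ → E} {a : E} (hf : HasSum f a) :
    HasSum (fun n ↦ ∑ jk ∈ antidiagonal n, ∑' m, f (m, jk)) a := by
  have hswap := (Equiv.prodComm (ℕ × ℕ) ℕ).hasSum_iff.2 hf
  exact (hswap.prod_fiberwise fun jk ↦ (hswap.summable.prod_factor jk).hasSum).sum_antidiagonal

theorem hasSum_choose_mul_pow_add {K : Type*} [NormedField K] [CompleteSpace K] (j : ℕ) {z : K}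
    (hz : ‖z‖ < 1) :
    HasSum (fun k ↦ ((k + j + 1).choose (j + 1) : K) * z ^ (j + k)) (z ^ j / (1 - z) ^ (j + 2)) := by
  rw [show z ^ j / (1 - z) ^ (j + 2) = z ^ j * (1 / (1 - z) ^ (j + 1 + 1)) by ring]
  refine ((hasSum_choose_mul_geometric_of_norm_lt_one (j + 1) hz).mul_left (z ^ j)).congr_fun
    fun k ↦ ?_
  rw [pow_add, add_assoc]
  ring

theorem RCLike.norm_exp_le_exp_norm {𝕜 : Type*} [RCLike 𝕜] (x : 𝕜) : ‖exp x‖ ≤ Real.exp ‖x‖ :=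
  (expSeries_div_hasSum_exp x).norm_le_of_bounded
    (Real.exp_eq_exp_ℝ ▸ expSeries_div_hasSum_exp ‖x‖) fun n ↦ by simp [norm_div, norm_pow]

section ExpGeom

variable {𝕜 : Type*} [RCLike 𝕜]

/-- The `(m, j, k)` term of `∑ₘ q^(m+1) exp ((m+1) c z / (1-z)) / (1-z)²`, expanded first in `exp`,
then each `z^j / (1-z)^(j+2)` as a binomial series in `z`. -/
noncomputable def expGeomTerm (q c z : 𝕜) (m j k : ℕ) : 𝕜 :=
  q ^ (m + 1) * ((((m + 1 : ℕ) : 𝕜) * c) ^ j / j ! * ((k + j + 1).choose (j + 1) * z ^ (j + k)))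

/- At `z = 1` both sides vanish, by the convention `x / 0 = 0`. -/
theorem hasSum_pow_div_factorial_mul_div_one_sub_pow (x z : 𝕜) :
    HasSum (fun j ↦ x ^ j / j ! * (z ^ j / (1 - z) ^ (j + 2))) (exp (x * z / (1 - z)) / (1 - z) ^ 2) := by
  refine ((expSeries_div_hasSum_exp (x * z / (1 - z))).div_const ((1 - z) ^ 2)).congr_fun
    fun j ↦ ?_
  rw [div_pow, mul_pow, pow_add]
  generalize 1 - z = w
  ring

theorem norm_mul_exp_mul_div_one_sub_le (q c : 𝕜) {z : 𝕜} (hz : ‖z‖ < 1) :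
    ‖q * exp (c * z / (1 - z))‖ ≤ ‖q‖ * Real.exp (‖c‖ * ‖z‖ / (1 - ‖z‖)) := by
  have h1z : 0 < 1 - ‖z‖ := by linarith
  have hsub : 1 - ‖z‖ ≤ ‖1 - z‖ := by simpa using norm_sub_norm_le (1 : 𝕜) z
  rw [norm_mul]
  gcongr
  refine (RCLike.norm_exp_le_exp_norm _).trans (Real.exp_le_exp.2 ?_)
  rw [norm_div, norm_mul]
  gcongr

theorem norm_expGeomTerm (q c z : 𝕜) (m j k : ℕ) :
    ‖expGeomTerm q c z m j k‖ = expGeomTerm ‖q‖ ‖c‖ ‖z‖ m j k := by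
  simp only [expGeomTerm, norm_mul, norm_div, norm_pow, RCLike.norm_natCast]

theorem sum_antidiagonal_tsum_expGeomTerm (q c z : 𝕜) (n : ℕ) :
    ∑ jk ∈ antidiagonal n, ∑' m, expGeomTerm q c z m jk.1 jk.2 =
      (∑ j ∈ range (n + 1), ((n + 1).choose (j + 1) : 𝕜) / j ! *
        ∑' m : ℕ, q ^ (m + 1) * (((m + 1 : ℕ) : 𝕜) * c) ^ j) * z ^ n := by
  rw [Nat.sum_antidiagonal_eq_sum_range_succ_mk, sum_mul]
  refine sum_congr rfl fun j hj ↦ ?_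
  have hjn : j ≤ n := Nat.lt_succ_iff.1 (mem_range.1 hj)
  simp only [expGeomTerm, Nat.sub_add_cancel hjn, add_tsub_cancel_of_le hjn]
  rw [← tsum_mul_left, ← tsum_mul_right]
  exact tsum_congr fun m ↦ by ring

variable {q c z : 𝕜}

theorem hasSum_expGeomTerm_fiber_fiber (hz : ‖z‖ < 1) (m j : ℕ) :
    HasSum (fun k ↦ expGeomTerm q c z m j k)
      (q ^ (m + 1) * ((((m + 1 : ℕ) : 𝕜) * c) ^ j / j ! * (z ^ j / (1 - z) ^ (j + 2)))) :=
  ((hasSum_choose_mul_pow_add j hz).mul_left _).mul_left _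

theorem hasSum_expGeomTerm_fiber (m : ℕ) :
    HasSum (fun j ↦ q ^ (m + 1) * ((((m + 1 : ℕ) : 𝕜) * c) ^ j / j ! * (z ^ j / (1 - z) ^ (j + 2))))
      (q ^ (m + 1) * (exp (c * z / (1 - z)) ^ (m + 1) / (1 - z) ^ 2)) := by
  have hexp : exp (((m + 1 : ℕ) : 𝕜) * c * z / (1 - z)) = exp (c * z / (1 - z)) ^ (m + 1) := by
    rw [← exp_nsmul, nsmul_eq_mul, mul_assoc, mul_div_assoc, mul_div_assoc]
  rw [← hexp]
  exact (hasSum_pow_div_factorial_mul_div_one_sub_pow _ z).mul_left _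

theorem hasSum_mul_pow_succ_div_one_sub_sq {y : 𝕜} (hy : ‖q * y‖ < 1) :
    HasSum (fun m : ℕ ↦ q ^ (m + 1) * (y ^ (m + 1) / (1 - z) ^ 2))
      (q * y / ((1 - z) ^ 2 * (1 - q * y))) := by
  rw [div_mul_eq_div_div, div_eq_mul_inv _ (1 - q * y)]
  refine ((hasSum_geometric_of_norm_lt_one hy).mul_left (q * y / (1 - z) ^ 2)).congr_fun
    fun m ↦ ?_
  ring

theorem hasSum_expGeomTerm_of_summable (hz : ‖z‖ < 1) (hq : ‖q * exp (c * z / (1 - z))‖ < 1)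
    (hs : Summable fun x : ℕ × ℕ × ℕ ↦ expGeomTerm q c z x.1 x.2.1 x.2.2) :
    HasSum (fun x : ℕ × ℕ × ℕ ↦ expGeomTerm q c z x.1 x.2.1 x.2.2)
      (q * exp (c * z / (1 - z)) / ((1 - z) ^ 2 * (1 - q * exp (c * z / (1 - z))))) :=
  (hasSum_mul_pow_succ_div_one_sub_sq hq).prod_of_hasSum
    (f := fun x : ℕ × ℕ × ℕ ↦ expGeomTerm q c z x.1 x.2.1 x.2.2)
    (fun m ↦ (hasSum_expGeomTerm_fiber m).prod_of_hasSum
      (f := fun x : ℕ × ℕ ↦ expGeomTerm q c z m x.1 x.2)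
      (hasSum_expGeomTerm_fiber_fiber hz m) (hs.prod_factor m)) hs

theorem summable_expGeomTerm_of_nonneg {a b t : ℝ} (ha : 0 ≤ a) (hb : 0 ≤ b) (ht₀ : 0 ≤ t)
    (ht : t < 1) (h : a * Real.exp (b * t / (1 - t)) < 1) :
    Summable fun x : ℕ × ℕ × ℕ ↦ expGeomTerm a b t x.1 x.2.1 x.2.2 := by
  have hE : ‖a * exp (b * t / (1 - t))‖ < 1 := by
    rwa [← Real.exp_eq_exp_ℝ, Real.norm_of_nonneg (by positivity)]
  have ht' : ‖t‖ < 1 := by rwa [Real.norm_of_nonneg ht₀]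
  have h₀ : ∀ m j k, 0 ≤ expGeomTerm a b t m j k := fun m j k ↦ by
    unfold expGeomTerm; positivity
  refine (hasSum_prod_of_nonneg (f := fun x : ℕ × ℕ × ℕ ↦ expGeomTerm a b t x.1 x.2.1 x.2.2)
    (fun _ ↦ h₀ _ _ _) (hasSum_mul_pow_succ_div_one_sub_sq hE)
    fun m ↦ hasSum_prod_of_nonneg (f := fun x : ℕ × ℕ ↦ expGeomTerm a b t m x.1 x.2)
      (fun _ ↦ h₀ _ _ _) (hasSum_expGeomTerm_fiber m)
      (hasSum_expGeomTerm_fiber_fiber ht' m)).summable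

theorem hasSum_expGeomTerm (hz : ‖z‖ < 1) (h : ‖q‖ * Real.exp (‖c‖ * ‖z‖ / (1 - ‖z‖)) < 1) :
    HasSum (fun x : ℕ × ℕ × ℕ ↦ expGeomTerm q c z x.1 x.2.1 x.2.2)
      (q * exp (c * z / (1 - z)) / ((1 - z) ^ 2 * (1 - q * exp (c * z / (1 - z))))) :=
  hasSum_expGeomTerm_of_summable hz ((norm_mul_exp_mul_div_one_sub_le q c hz).trans_lt h) <|
    .of_norm <| (summable_expGeomTerm_of_nonneg (norm_nonneg q) (norm_nonneg c) (norm_nonneg z)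
      hz h).congr fun x ↦ (norm_expGeomTerm q c z x.1 x.2.1 x.2.2).symm

end ExpGeom

theorem hasDerivAt_log_one_sub_mul_exp (α L : ℂ) {z : ℂ} (hz : z ≠ 1)
    (hQ : ‖α * Complex.exp (-(1 / (1 - z)) * L)‖ < 1) :
    HasDerivAt (fun w ↦ Complex.log (1 - α * Complex.exp (-(1 / (1 - w)) * L)))
      (L * (α * Complex.exp (-(1 / (1 - z)) * L) /
        ((1 - z) ^ 2 * (1 - α * Complex.exp (-(1 / (1 - z)) * L))))) z := by
  have h1z : 1 - z ≠ 0 := sub_ne_zero.2 hz.symm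
  have hslit : 1 - α * Complex.exp (-(1 / (1 - z)) * L) ∈ Complex.slitPlane := by
    rw [← norm_neg] at hQ
    simpa [sub_eq_add_neg] using Complex.mem_slitPlane_of_norm_lt_one hQ
  have hs : HasDerivAt (fun w : ℂ ↦ 1 / (1 - w)) (1 / (1 - z) ^ 2) z := by
    have := ((hasDerivAt_id z).const_sub 1).inv h1z
    simp only [one_div, id, neg_neg] at this ⊢
    exact this
  refine ((((hs.neg.mul_const L).cexp.const_mul α).const_sub 1).clog hslit).congr_deriv ?_
  simp only [Pi.neg_apply]
  field_simp

theorem exp_neg_one_div_one_sub_mul_log {p : ℕ} (hp : 0 < p) {z : ℂ} (hz : z ≠ 1) :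
    Complex.exp (-(1 / (1 - z)) * Real.log p) = Complex.exp (-Real.log p * z / (1 - z)) / p := by
  have h1z : 1 - z ≠ 0 := sub_ne_zero.2 hz.symm
  have hsplit : -(1 / (1 - z)) * Real.log p = -Real.log p * z / (1 - z) + -Real.log p := by
    field_simp
    ring
  rw [hsplit, Complex.exp_add, ← Complex.ofReal_neg, ← Complex.ofReal_exp, Real.exp_neg,
    Real.exp_log (by exact_mod_cast hp)]
  push_cast
  rfl

theorem norm_div_mul_exp_lt_one {p : ℕ} (hp : 1 < p) {α : ℂ} (hα : ‖α‖ ≤ 1) {t : ℝ}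
    (ht : t < 1 / 2) : ‖α‖ / p * Real.exp (Real.log p * t / (1 - t)) < 1 := by
  have hp₀ : (0 : ℝ) < p := by positivity
  have hlog : 0 < Real.log p := Real.log_pos (by exact_mod_cast hp)
  have hexp : Real.exp (Real.log p * t / (1 - t)) < p := by
    refine (Real.exp_lt_exp.2 ?_).trans_eq (Real.exp_log hp₀)
    rw [div_lt_iff₀ (by linarith)]
    nlinarith
  calc ‖α‖ / p * Real.exp (Real.log p * t / (1 - t))
      ≤ 1 / p * Real.exp (Real.log p * t / (1 - t)) := by gcongr
    _ < 1 := by rwa [one_div_mul_eq_div, div_lt_one hp₀]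

theorem log_mul_tsum_div_pow_mul_neg_log_pow (p : ℕ) (α : ℂ) (j : ℕ) :
    Real.log p * ∑' m : ℕ, (α / p) ^ (m + 1) * (((m + 1 : ℕ) : ℂ) * -Real.log p) ^ j =
      (-1) ^ j * ∑' m : ℕ, (Real.log p / (p : ℂ) ^ (m + 1)) * α ^ (m + 1) *
        (Real.log ((p : ℝ) ^ (m + 1)) : ℂ) ^ j := by
  rw [← tsum_mul_left, ← tsum_mul_left]
  refine tsum_congr fun m ↦ ?_
  rw [mul_neg, neg_pow (((m + 1 : ℕ) : ℂ) * _), Real.log_pow]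
  push_cast
  ring

/-- Lemma 3.5: with `s = 1/(1-z)`,
`d/dz log(1 - α p^{-s}) = ∑_{n≥0} (∑_{j=0}^n C(n+1,j+1) ((-1)^j/j!) ∑_{m≥1} (log p / p^m) α^m (log p^m)^j) zⁿ`
for `z` in a small neighborhood of the origin. -/
theorem stmt3 (p : ℕ) (hp : p.Prime) (α : ℂ) (hα : ‖α‖ ≤ 1) :
    ∃ r > 0, ∀ z : ℂ, ‖z‖ < r →
      HasSum
        (fun n : ℕ =>
          (∑ j ∈ Finset.range (n + 1), ((n + 1).choose (j + 1) : ℂ) *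
              ((-1) ^ j / (Nat.factorial j : ℂ)) *
              ∑' m : ℕ, (Real.log p / (p : ℂ) ^ (m + 1)) * α ^ (m + 1) *
                (Real.log ((p : ℝ) ^ (m + 1)) : ℂ) ^ j) * z ^ n)
        (deriv (fun w : ℂ =>
          Complex.log (1 - α * Complex.exp (-(1 / (1 - w)) * Real.log p))) z) := by
  refine ⟨1 / 2, by norm_num, fun z hz ↦ ?_⟩
  have hz_lt_one : ‖z‖ < 1 := by linarith
  have hz_ne_one : z ≠ 1 := by rintro rfl; simp at hz_lt_one
  have hbound : ‖α / p‖ * Real.exp (‖-(Real.log p : ℂ)‖ * ‖z‖ / (1 - ‖z‖)) < 1 := by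
    rw [norm_neg, Complex.norm_real, Real.norm_of_nonneg (Real.log_natCast_nonneg p), norm_div,
      Complex.norm_natCast]
    exact norm_div_mul_exp_lt_one hp.one_lt hα hz
  have hQ : α * Complex.exp (-(1 / (1 - z)) * Real.log p) =
      α / p * exp (-(Real.log p : ℂ) * z / (1 - z)) := by
    rw [exp_neg_one_div_one_sub_mul_log hp.pos hz_ne_one, ← Complex.exp_eq_exp_ℂ]
    ring
  have hnorm : ‖α * Complex.exp (-(1 / (1 - z)) * Real.log p)‖ < 1 :=
    hQ ▸ (norm_mul_exp_mul_div_one_sub_le _ _ hz_lt_one).trans_lt hbound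
  rw [(hasDerivAt_log_one_sub_mul_exp α _ hz_ne_one hnorm).deriv, hQ]
  refine (((hasSum_expGeomTerm hz_lt_one hbound).sum_antidiagonal_tsum).mul_left _).congr_fun
    fun n ↦ ?_
  rw [sum_antidiagonal_tsum_expGeomTerm, ← mul_assoc, mul_sum]
  congr 1
  refine sum_congr rfl fun j _ ↦ ?_
  rw [mul_left_comm, log_mul_tsum_div_pow_mul_neg_log_pow]
  ring
end

section
/- For every positive integer m, every prime p, and every positive integer k, the n-th derivative at z = 0 of the function z ↦ (1-z)^{-m} p^{-k/(1-z)} equals p^{-k} ∑_{j=0}^{n} C(n,j) (n+m-1)(n+m-2)⋯(j+m) (-k log p)^j, where the empty product (when j = n) is interpreted as 1. -/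
/-!
Write `φₛ(z) = (1 - z)^(-s) exp (a / (1 - z))`. Then `φₛ' = s φₛ₊₁ + a φₛ₊₂`, so the `n`-th
derivative of `φₘ` is `∑ⱼ cₙⱼ aʲ φₘ₊ₙ₊ⱼ` with `cₙ₊₁,ⱼ₊₁ = (m + n + j + 1) cₙ,ⱼ₊₁ + cₙⱼ`, a recurrence
solved by `cₙⱼ = C(n, j) (j + m)(j + m + 1)⋯(n + m - 1)`. At `z = 0` every `φₛ` equals `exp a`,
which is `p^(-k)` for `a = -k log p`.
-/

open Finset

theorem sum_range_succ_mul_of_recurrence {R : Type*} [NonUnitalNonAssocSemiring R]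
    (n : ℕ) (u v w X : ℕ → R) (h0 : u 0 = v 0) (hsucc : ∀ j, u (j + 1) = v (j + 1) + w j)
    (hv : v (n + 1) = 0) :
    ∑ j ∈ range (n + 2), u j * X j = ∑ j ∈ range (n + 1), (v j * X j + w j * X (j + 1)) := by
  simp only [sum_range_succ' (fun j => u j * X j), hsucc, add_mul, sum_add_distrib, h0]
  rw [add_right_comm, ← sum_range_succ' (fun j => v j * X j), sum_range_succ, hv, zero_mul,
    add_zero]

namespace ExpPole

def coeff (m n j : ℕ) : ℕ := n.choose j * ∏ i ∈ Ico (j + m) (n + m), i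

theorem coeff_succ_zero (m n : ℕ) : coeff m (n + 1) 0 = coeff m n 0 * (m + n) := by
  simp only [coeff, Nat.choose_zero_right, one_mul, zero_add]
  rw [show n + 1 + m = n + m + 1 by omega, prod_Ico_succ_top (Nat.le_add_left m n), add_comm n]

theorem coeff_eq_zero_of_lt {m n j : ℕ} (h : n < j) : coeff m n j = 0 := by
  simp [coeff, Nat.choose_eq_zero_of_lt h]

theorem coeff_succ_succ (m n j : ℕ) :
    coeff m (n + 1) (j + 1) = coeff m n (j + 1) * (m + n + (j + 1)) + coeff m n j := by
  rcases lt_or_ge j n with hj | hj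
  · have hchoose : (n + 1).choose (j + 1) * (n + m) =
        n.choose (j + 1) * (m + n + (j + 1)) + n.choose j * (j + m) := by
      have hsucc := Nat.choose_succ_right_eq n j
      have hsub : n - j + j = n := Nat.sub_add_cancel hj.le
      rw [Nat.choose_succ_succ]
      nlinarith
    simp only [coeff]
    rw [show n + 1 + m = n + m + 1 by omega, prod_Ico_succ_top (by omega),
      prod_eq_prod_Ico_succ_bot (by omega : j + m < n + m), show j + m + 1 = j + 1 + m by omega]
    linear_combination (∏ i ∈ Ico (j + 1 + m) (n + m), i) * hchoose
  · simp only [coeff, Nat.choose_eq_zero_of_lt (Nat.lt_succ_of_le hj), zero_mul, zero_add,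
      Ico_eq_empty_of_le (by omega : n + 1 + m ≤ j + 1 + m),
      Ico_eq_empty_of_le (by omega : n + m ≤ j + m), prod_empty, Nat.choose_succ_succ, add_zero]

variable (a : ℂ)

noncomputable def pole (s : ℕ) (z : ℂ) : ℂ := (1 - z) ^ (-(s : ℤ)) * Complex.exp (a / (1 - z))

theorem hasDerivAt_pole (s : ℕ) {z : ℂ} (hz : z ≠ 1) :
    HasDerivAt (pole a s) (s * pole a (s + 1) z + a * pole a (s + 2) z) z := by
  have hz' : 1 - z ≠ 0 := sub_ne_zero.mpr hz.symm
  have h1 : HasDerivAt (fun z : ℂ => 1 - z) (-1) z := by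
    simpa using (hasDerivAt_id z).const_sub 1
  have hpow := (hasDerivAt_zpow (-(s : ℤ)) (1 - z) (Or.inl hz')).comp z h1
  have hexp := ((hasDerivAt_const z a).div h1 hz').cexp
  refine (hpow.mul hexp).congr_deriv ?_
  rw [show -(s : ℤ) - 1 = -((s + 1 : ℕ) : ℤ) by push_cast; ring]
  simp only [pole, Function.comp_apply, Pi.div_apply, Int.cast_neg, Int.cast_natCast, zpow_neg,
    zpow_natCast]
  field_simp
  ring

noncomputable def iteratedDerivFormula (m n : ℕ) (z : ℂ) : ℂ :=
  ∑ j ∈ range (n + 1), (coeff m n j : ℂ) * (a ^ j * pole a (m + n + j) z)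

theorem hasDerivAt_iteratedDerivFormula (m n : ℕ) {z : ℂ} (hz : z ≠ 1) :
    HasDerivAt (iteratedDerivFormula a m n) (iteratedDerivFormula a m (n + 1) z) z := by
  have hterm := fun j (_ : j ∈ range (n + 1)) =>
    ((hasDerivAt_pole a (m + n + j) hz).const_mul (a ^ j)).const_mul (coeff m n j : ℂ)
  refine (HasDerivAt.fun_sum hterm).congr_deriv ?_
  rw [iteratedDerivFormula, show n + 1 + 1 = n + 2 by rfl]
  rw [sum_range_succ_mul_of_recurrence n (fun j => (coeff m (n + 1) j : ℂ))
    (fun j => (coeff m n j : ℂ) * (m + n + j)) (fun j => (coeff m n j : ℂ))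
    (fun j => a ^ j * pole a (m + (n + 1) + j) z)]
  · refine sum_congr rfl fun j _ => ?_
    rw [show m + (n + 1) + j = m + n + j + 1 by omega,
      show m + (n + 1) + (j + 1) = m + n + j + 2 by omega]
    push_cast
    ring
  · simp [coeff_succ_zero]
  · intro j; simp [coeff_succ_succ]
  · simp [coeff_eq_zero_of_lt (Nat.lt_succ_self n)]

theorem iteratedDeriv_pole (m n : ℕ) {z : ℂ} (hz : z ≠ 1) :
    iteratedDeriv n (pole a m) z = iteratedDerivFormula a m n z := by
  induction n generalizing z with
  | zero => simp [iteratedDerivFormula, coeff]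
  | succ n ih =>
    have hev : iteratedDeriv n (pole a m) =ᶠ[nhds z] iteratedDerivFormula a m n :=
      Filter.eventually_of_mem (isOpen_ne.mem_nhds hz) fun w hw => ih hw
    rw [iteratedDeriv_succ, hev.deriv_eq, (hasDerivAt_iteratedDerivFormula a m n hz).deriv]

theorem iteratedDeriv_pole_zero (m n : ℕ) :
    iteratedDeriv n (pole a m) 0 =
      Complex.exp a * ∑ j ∈ range (n + 1), (coeff m n j : ℂ) * a ^ j := by
  rw [iteratedDeriv_pole a m n zero_ne_one, iteratedDerivFormula, mul_sum]
  refine sum_congr rfl fun j _ => ?_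
  simp only [pole, sub_zero, one_zpow, div_one]
  ring

end ExpPole

theorem stmt4_general (m k : ℕ) (p : ℕ) (hp : p.Prime)
    (n : ℕ) :
    iteratedDeriv n
        (fun z : ℂ => (1 - z) ^ (-(m : ℤ)) *
          Complex.exp (-((k : ℂ) * Real.log p) / (1 - z))) 0 =
      (p : ℂ) ^ (-(k : ℤ)) *
        ∑ j ∈ Finset.range (n + 1), (n.choose j : ℂ) *
          (∏ i ∈ Finset.Ico (j + m) (n + m), (i : ℂ)) *
          (-((k : ℂ) * Real.log p)) ^ j := by
  have hexp : Complex.exp (-((k : ℂ) * Real.log p)) = (p : ℂ) ^ (-(k : ℤ)) := by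
    rw [Complex.exp_neg, Complex.exp_nat_mul, ← Complex.ofReal_exp,
      Real.exp_log (by exact_mod_cast hp.pos), zpow_neg, zpow_natCast, Complex.ofReal_natCast]
  have h := ExpPole.iteratedDeriv_pole_zero (-((k : ℂ) * Real.log p)) m n
  simp only [ExpPole.coeff, Nat.cast_mul, Nat.cast_prod, hexp] at h
  exact h

/-- Formula (3.11): the `n`-th derivative at `z = 0` of `z ↦ (1-z)^{-m} p^{-k/(1-z)}` equals
`p^{-k} ∑_{j=0}^n C(n,j) (n+m-1)(n+m-2)⋯(j+m) (-k log p)^j`. -/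
theorem stmt4 (m k : ℕ) (hm : 1 ≤ m) (hk : 1 ≤ k) (p : ℕ) (hp : p.Prime)
    (n : ℕ) (hn : 1 ≤ n) :
    iteratedDeriv n
        (fun z : ℂ => (1 - z) ^ (-(m : ℤ)) *
          Complex.exp (-((k : ℂ) * Real.log p) / (1 - z))) 0 =
      (p : ℂ) ^ (-(k : ℤ)) *
        ∑ j ∈ Finset.range (n + 1), (n.choose j : ℂ) *
          (∏ i ∈ Finset.Ico (j + m) (n + m), (i : ℂ)) *
          (-((k : ℂ) * Real.log p)) ^ j :=
  stmt4_general m k p hp n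
end
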